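/- For all positive integers r, m, and l, there exists n such that for every r-coloring of the set of subposets of the grid n×n that are isomorphic to m×m, there is a subposet P of n×n isomorphic to l×l such that every subposet of P isomorphic to m×m receives the same color. -/

import Mathlib

/-!
Write `M = m * m` and `L = l * l`. A `2M`-element subset `X` of a chain splits into its lower
half `A` and upper half `B`, and the grid `A × B ≅ M × M` contains a canonical copy of `m × m`,
its core: `(i, j)` goes to the pair formed by the `(m i + j)`-th element of `A` and the
`(m j + i)`-th element of `B`. Colour `X` by the colour of its core. The finite Ramsey theorem
gives a `2L`-element set `S` all of whose `2M`-subsets get the same colour, and the core of the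
grid of `S` is the required copy of `l × l`.

A copy of `m × m` inside that core has injective coordinate projections `p` and `q`, which
together realize the order of `m × m`. For such a realizer one of `p`, `q` increases from each row
to the next, so one of them enumerates the grid lexicographically and the other
colexicographically. Hence the copy is the core of the `2M`-set formed by its coordinates, and it
has the common colour.
-/

open Finset Function

section Ramsey

universe u

variable {κ : Type*}

def IsEndHomogeneous {α : Type*} [LinearOrder α] (χ : Finset α → κ) (q : ℕ) (s : Finset α)
    (f : α → κ) : Prop :=
  ∀ x ∈ s, ∀ X ⊆ s.filter (x < ·), #X = q → χ (insert x X) = f x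

theorem IsEndHomogeneous.exists_mem_eq {α : Type*} [LinearOrder α] {χ : Finset α → κ} {q : ℕ}
    {s : Finset α} {f : α → κ} (h : IsEndHomogeneous χ q s f) {X : Finset α} (hXs : X ⊆ s)
    (hX : #X = q + 1) : ∃ y ∈ X, χ X = f y := by
  have hne : X.Nonempty := card_pos.1 (by omega)
  set y := X.min' hne
  have hyX : y ∈ X := X.min'_mem hne
  have hlt : X.erase y ⊆ s.filter (y < ·) := fun z hz => by
    rw [mem_erase] at hz
    exact mem_filter.2 ⟨hXs hz.2, lt_of_le_of_ne (X.min'_le z hz.2) (Ne.symm hz.1)⟩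
  have := h y (hXs hyX) (X.erase y) hlt (by rw [card_erase_of_mem hyX, hX]; rfl)
  rw [insert_erase hyX] at this
  exact ⟨y, hyX, this⟩

theorem exists_isEndHomogeneous {q : ℕ}
    (hramsey : ∀ p, ∃ N, ∀ {α : Type u} [LinearOrder α] (T : Finset α), N ≤ #T →
      ∀ χ : Finset α → κ, ∃ S ⊆ T, #S = p ∧ ∃ k, ∀ X ⊆ S, #X = q → χ X = k) (t : ℕ) :
    ∃ N, ∀ {α : Type u} [LinearOrder α] (T : Finset α), N ≤ #T →
      ∀ χ : Finset α → κ, ∃ s ⊆ T, #s = t ∧ ∃ f, IsEndHomogeneous χ q s f := by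
  induction t with
  | zero =>
    exact ⟨0, fun _ _ χ => ⟨∅, empty_subset _, rfl, fun _ => χ ∅, by simp [IsEndHomogeneous]⟩⟩
  | succ t iht =>
    obtain ⟨N₁, h₁⟩ := iht
    obtain ⟨N₂, h₂⟩ := hramsey N₁
    refine ⟨N₂ + 1, fun T hT χ => ?_⟩
    have hne : T.Nonempty := card_pos.1 (by omega)
    set x := T.min' hne
    have hxT : x ∈ T := T.min'_mem hne
    obtain ⟨S, hST, hS, k, hk⟩ := h₂ (T.erase x) (by rw [card_erase_of_mem hxT]; omega)
      (fun X => χ (insert x X))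
    obtain ⟨s, hsS, hs, f, hf⟩ := h₁ S hS.ge χ
    have hxs : x ∉ s := fun h => (mem_erase.1 (hST (hsS h))).1 rfl
    refine ⟨insert x s, insert_subset hxT ((hsS.trans hST).trans (erase_subset _ _)),
      by rw [card_insert_of_notMem hxs, hs], update f x k, ?_⟩
    intro y hy X hX hXcard
    rcases mem_insert.1 hy with rfl | hy
    · rw [update_self]
      refine hk X (fun z hz => hsS ?_) hXcard
      obtain ⟨hz, hyz⟩ := mem_filter.1 (hX hz)
      exact (mem_insert.1 hz).resolve_left hyz.ne'
    · have hxy : x ≤ y := T.min'_le y (mem_of_mem_erase (hST (hsS hy)))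
      rw [update_of_ne (ne_of_mem_of_not_mem hy hxs)]
      refine hf y hy X (fun z hz => ?_) hXcard
      obtain ⟨hz, hyz⟩ := mem_filter.1 (hX hz)
      have hzx : z ≠ x := by rintro rfl; exact hxy.not_gt hyz
      exact mem_filter.2 ⟨(mem_insert.1 hz).resolve_left hzx, hyz⟩

theorem exists_homogeneous_subset [Fintype κ] (q : ℕ) :
    ∀ p, ∃ N, ∀ {α : Type u} [LinearOrder α] (T : Finset α), N ≤ #T →
      ∀ χ : Finset α → κ, ∃ S ⊆ T, #S = p ∧ ∃ k, ∀ X ⊆ S, #X = q → χ X = k := by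
  induction q with
  | zero =>
    refine fun p => ⟨p, fun T hT χ => ?_⟩
    obtain ⟨S, hST, hS⟩ := exists_subset_card_eq hT
    exact ⟨S, hST, hS, χ ∅, fun X _ hX => by rw [card_eq_zero.1 hX]⟩
  | succ q ih =>
    intro p
    obtain ⟨N, hN⟩ := exists_isEndHomogeneous ih (Fintype.card κ * p + 1)
    refine ⟨N, fun T hT χ => ?_⟩
    obtain ⟨s, hsT, hs, f, hf⟩ := hN T hT χ
    classical
    obtain ⟨k, -, hk⟩ := exists_lt_card_fiber_of_mul_lt_card_of_maps_to (s := s) (t := univ)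
      (f := f) (n := p) (fun _ _ => mem_univ _) (by rw [card_univ, hs]; omega)
    obtain ⟨S, hSk, hS⟩ := exists_subset_card_eq hk.le
    have hSs : S ⊆ s := hSk.trans (filter_subset _ _)
    refine ⟨S, hSs.trans hsT, hS, k, fun X hXS hX => ?_⟩
    obtain ⟨y, hyX, hχ⟩ := hf.exists_mem_eq (hXS.trans hSs) hX
    exact hχ.trans (mem_filter.1 (hSk (hXS hyX))).2

end Ramsey

section LexOrder

variable {α β ι₁ ι₂ : Type*}

theorem Prod.le_iff_toLex_le_and_toLex_swap_le [LinearOrder α] [LinearOrder β] {x y : α × β} :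
    x ≤ y ↔ toLex x ≤ toLex y ∧ toLex x.swap ≤ toLex y.swap := by
  simp only [Prod.Lex.toLex_le_toLex, Prod.fst_swap, Prod.snd_swap, Prod.le_def]
  constructor
  · rintro ⟨h₁, h₂⟩
    exact ⟨h₁.lt_or_eq.imp_right fun h => ⟨h, h₂⟩, h₂.lt_or_eq.imp_right fun h => ⟨h, h₁⟩⟩
  · rintro ⟨h₁, h₂⟩
    exact ⟨h₁.elim le_of_lt fun h => h.1.le, h₂.elim le_of_lt fun h => h.1.le⟩

def RowMajor [LT ι₁] [LT α] (p : ι₁ × ι₂ → α) : Prop :=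
  ∀ u v, u.1 < v.1 → p u < p v

theorem RowMajor.strictMono_ofLex [Preorder ι₁] [Preorder ι₂] [Preorder α]
    {p : ι₁ × ι₂ → α} (hrow : RowMajor p) (hp : StrictMono p) :
    StrictMono fun x : ι₁ ×ₗ ι₂ => p (ofLex x) := by
  intro x y hxy
  rcases Prod.Lex.lt_iff.1 hxy with h | ⟨h₁, h₂⟩
  · exact hrow _ _ h
  · exact hp (Prod.lt_iff.2 (Or.inr ⟨h₁.le, h₂⟩))

theorem strictMono_finProdFinEquiv_ofLex (a b : ℕ) :
    StrictMono fun x : Fin a ×ₗ Fin b => finProdFinEquiv (ofLex x) := by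
  intro x y hxy
  rw [Fin.lt_def, finProdFinEquiv_apply_val, finProdFinEquiv_apply_val]
  rcases Prod.Lex.lt_iff.1 hxy with h | ⟨h₁, h₂⟩
  · have : b * ((ofLex x).1 + 1 : ℕ) ≤ b * (ofLex y).1 := Nat.mul_le_mul_left b h
    rw [mul_add] at this
    omega
  · rw [h₁]
    exact Nat.add_lt_add_right h₂ _

def finLexProdOrderIso (a b : ℕ) : Fin a ×ₗ Fin b ≃o Fin (a * b) where
  toEquiv := toLex.symm.trans finProdFinEquiv
  map_rel_iff' := (strictMono_finProdFinEquiv_ofLex a b).le_iff_le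

theorem eq_orderEmbOfFin_finProdFinEquiv [LinearOrder α] {a b : ℕ} {p : Fin a × Fin b → α}
    (hp : StrictMono fun x : Fin a ×ₗ Fin b => p (ofLex x)) {A : Finset α} (hA : #A = a * b)
    (hpA : ∀ x, p x ∈ A) (x : Fin a × Fin b) :
    p x = A.orderEmbOfFin hA (finProdFinEquiv x) := by
  have := orderEmbOfFin_unique hA (fun _ => hpA _)
    (hp.comp (finLexProdOrderIso a b).symm.strictMono)
  simpa [finLexProdOrderIso] using congrFun this (finProdFinEquiv x)

theorem Fin.castAdd_lt_natAdd {p q : ℕ} (i : Fin p) (j : Fin q) :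
    Fin.castAdd q i < Fin.natAdd p j :=
  Fin.lt_def.2 (by simp only [Fin.val_castAdd, Fin.val_natAdd]; omega)

theorem Fin.strictMono_append [Preorder α] {p q : ℕ} {a : Fin p → α} {b : Fin q → α}
    (ha : StrictMono a) (hb : StrictMono b) (hab : ∀ i j, a i < b j) :
    StrictMono (Fin.append a b) := by
  intro x y hxy
  induction x using Fin.addCases with
  | left i =>
    induction y using Fin.addCases with
    | left j => simpa using ha ((Fin.strictMono_castAdd q).lt_iff_lt.1 hxy)
    | right j => simpa using hab i j
  | right i =>
    induction y using Fin.addCases with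
    | left j => exact absurd hxy (Fin.castAdd_lt_natAdd j i).not_gt
    | right j => simpa using hb ((Fin.strictMono_natAdd p).lt_iff_lt.1 hxy)

theorem Finset.orderEmbOfFin_union [LinearOrder α] {A B : Finset α} {p q : ℕ} (hA : #A = p)
    (hB : #B = q) (hAB : ∀ a ∈ A, ∀ b ∈ B, a < b) (h : #(A ∪ B) = p + q) :
    ⇑((A ∪ B).orderEmbOfFin h) = Fin.append (A.orderEmbOfFin hA) (B.orderEmbOfFin hB) := by
  refine (orderEmbOfFin_unique h (fun i => ?_) (Fin.strictMono_append
    (OrderEmbedding.strictMono _) (OrderEmbedding.strictMono _)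
    fun i j => hAB _ (orderEmbOfFin_mem _ _ _) _ (orderEmbOfFin_mem _ _ _))).symm
  induction i using Fin.addCases <;> simp

end LexOrder

section Realizer

variable {P α β ι₁ ι₂ : Type*}

def IsRealizer [LE P] [LE α] [LE β] (p : P → α) (q : P → β) : Prop :=
  ∀ x y, x ≤ y ↔ p x ≤ p y ∧ q x ≤ q y

namespace IsRealizer

theorem symm [LE P] [LE α] [LE β] {p : P → α} {q : P → β} (h : IsRealizer p q) :
    IsRealizer q p :=
  fun x y => (h x y).trans and_comm

theorem monotone_left [Preorder P] [Preorder α] [LE β] {p : P → α} {q : P → β}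
    (h : IsRealizer p q) : Monotone p :=
  fun x y hxy => ((h x y).1 hxy).1

theorem strictMono_left [PartialOrder P] [PartialOrder α] [LE β] {p : P → α} {q : P → β}
    (h : IsRealizer p q) (hp : Injective p) : StrictMono p :=
  h.monotone_left.strictMono_of_injective hp

theorem lt_right_of_le_left [LE P] [LE α] [LinearOrder β] {p : P → α} {q : P → β}
    (h : IsRealizer p q) {x y : P} (hyx : ¬y ≤ x) (hp : p y ≤ p x) : q x < q y :=
  not_le.1 fun hq => hyx ((h y x).2 ⟨hp, hq⟩)

theorem lt_right_of_fst_lt [Preorder ι₁] [Preorder ι₂] [Preorder α] [LinearOrder β]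
    {p : ι₁ × ι₂ → α} {q : ι₁ × ι₂ → β} (h : IsRealizer p q) {u v : ι₁ × ι₂} (huv : u.1 < v.1)
    (hpvu : p v ≤ p u) {s t : ι₂} (hs : u.2 ≤ s) (ht : t ≤ v.2) : q (u.1, s) < q (v.1, t) :=
  h.lt_right_of_le_left (fun hle => (Prod.mk_le_mk.1 hle).1.not_gt huv)
    ((h.monotone_left (Prod.mk_le_mk.2 ⟨le_rfl, ht⟩)).trans
      (hpvu.trans (h.monotone_left (Prod.mk_le_mk.2 ⟨le_rfl, hs⟩))))

theorem rowMajor_or [LinearOrder ι₁] [LinearOrder ι₂] [LinearOrder α] [LinearOrder β]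
    {p : ι₁ × ι₂ → α} {q : ι₁ × ι₂ → β} (h : IsRealizer p q) (hp : Injective p) :
    RowMajor p ∨ RowMajor q := by
  unfold RowMajor
  by_contra! ⟨⟨u, v, huv, hpvu⟩, ⟨u', v', huv', hqvu⟩⟩
  set s := max u.2 u'.2
  set t := min v.2 v'.2
  have hvu : v.2 < u.2 := not_le.1 fun hle =>
    (hpvu.lt_of_ne (hp.ne (ne_of_apply_ne Prod.fst huv.ne'))).not_ge
      (h.monotone_left (Prod.mk_le_mk.2 ⟨huv.le, hle⟩))
  have hq' : q (u.1, s) < q (v.1, t) :=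
    h.lt_right_of_fst_lt huv hpvu (le_max_left _ _) (min_le_left _ _)
  have hp' : p (u'.1, s) < p (v'.1, t) :=
    h.symm.lt_right_of_fst_lt huv' hqvu (le_max_right _ _) (min_le_right _ _)
  -- `hq'` and `hp'` put `(min u.1 u'.1, s)` below `(max v.1 v'.1, t)`, but `t < s`
  have hle : (min u.1 u'.1, s) ≤ (max v.1 v'.1, t) := (h _ _).2
    ⟨((h.monotone_left (Prod.mk_le_mk.2 ⟨min_le_right _ _, le_rfl⟩)).trans hp'.le).trans
        (h.monotone_left (Prod.mk_le_mk.2 ⟨le_max_right _ _, le_rfl⟩)),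
      ((h.symm.monotone_left (Prod.mk_le_mk.2 ⟨min_le_left _ _, le_rfl⟩)).trans hq'.le).trans
        (h.symm.monotone_left (Prod.mk_le_mk.2 ⟨le_max_left _ _, le_rfl⟩))⟩
  exact (Prod.mk_le_mk.1 hle).2.not_gt
    ((min_le_left _ _).trans_lt (hvu.trans_le (le_max_left _ _)))

theorem rowMajor_comp_swap [LinearOrder ι₁] [PartialOrder ι₂] [Preorder α] [LinearOrder β]
    {p : ι₁ × ι₂ → α} {q : ι₁ × ι₂ → β} (h : IsRealizer p q) (hq : Injective q)
    (hrow : RowMajor p) : RowMajor (q ∘ Prod.swap) := by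
  intro u v huv
  rcases le_or_gt u.2 v.2 with h₂ | h₂
  · exact h.symm.strictMono_left hq (Prod.lt_iff.2 (Or.inr ⟨h₂, huv⟩))
  · exact h.lt_right_of_le_left (fun hvu => hvu.2.not_gt huv) (hrow _ _ h₂).le

end IsRealizer

end Realizer

section GridCore

variable {α β : Type*}

/-- The casual embedding of `m × m` into `M × M`, `M = m * m` (lexicographic in the first
coordinate, colexicographic in the second), followed by `a × b`. -/
def gridMap {m : ℕ} (a : Fin (m * m) → α) (b : Fin (m * m) → β) (x : Fin m × Fin m) : α × β :=
  (a (finProdFinEquiv x), b (finProdFinEquiv x.swap))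

theorem gridMap_le_gridMap_iff [Preorder α] [Preorder β] {m : ℕ} {a : Fin (m * m) → α}
    {b : Fin (m * m) → β} (ha : StrictMono a) (hb : StrictMono b) {x y : Fin m × Fin m} :
    gridMap a b x ≤ gridMap a b y ↔ x ≤ y := by
  rw [Prod.le_iff_toLex_le_and_toLex_swap_le, gridMap, gridMap, Prod.mk_le_mk, ha.le_iff_le,
    hb.le_iff_le]
  exact and_congr (finLexProdOrderIso m m).le_iff_le (finLexProdOrderIso m m).le_iff_le

theorem IsRealizer.eq_gridMap_of_rowMajor [LinearOrder α] [LinearOrder β] {m : ℕ}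
    {p : Fin m × Fin m → α} {q : Fin m × Fin m → β} (h : IsRealizer p q) (hp : Injective p)
    (hq : Injective q) (hrow : RowMajor p) {A : Finset α} {B : Finset β}
    (hA : #A = m * m) (hpA : ∀ x, p x ∈ A) (hB : #B = m * m) (hqB : ∀ x, q x ∈ B)
    (x : Fin m × Fin m) :
    (p x, q x) = gridMap (A.orderEmbOfFin hA) (B.orderEmbOfFin hB) x := by
  have hq' : StrictMono fun y : Fin m ×ₗ Fin m => q (ofLex y).swap :=
    (h.rowMajor_comp_swap hq hrow).strictMono_ofLex
      ((h.symm.strictMono_left hq).comp fun _ _ => Prod.swap_lt_swap.2)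
  exact Prod.ext
    (eq_orderEmbOfFin_finProdFinEquiv (hrow.strictMono_ofLex (h.strictMono_left hp)) hA hpA x)
    (eq_orderEmbOfFin_finProdFinEquiv (p := fun y => q y.swap) hq' hB (fun _ => hqB _) x.swap)

theorem IsRealizer.range_eq_range_gridMap [LinearOrder α] [LinearOrder β] {m : ℕ}
    {p : Fin m × Fin m → α} {q : Fin m × Fin m → β} (h : IsRealizer p q) (hp : Injective p)
    (hq : Injective q) {A : Finset α} {B : Finset β} (hA : #A = m * m) (hpA : ∀ x, p x ∈ A)
    (hB : #B = m * m) (hqB : ∀ x, q x ∈ B) :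
    Set.range (fun x => (p x, q x)) =
      Set.range (gridMap (A.orderEmbOfFin hA) (B.orderEmbOfFin hB)) := by
  rcases h.rowMajor_or hp with hrow | hrow
  · exact congrArg Set.range (funext (h.eq_gridMap_of_rowMajor hp hq hrow hA hpA hB hqB))
  · rw [← Prod.swap_surjective.range_comp (gridMap _ _)]
    exact congrArg Set.range (funext fun x =>
      congrArg Prod.swap (h.symm.eq_gridMap_of_rowMajor hq hp hrow hB hqB hA hpA x))

/-- The core of the grid (lower half of `X`) × (upper half of `X`) for a `2 m²`-element set `X`;
empty when `X` has any other size. -/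
def gridCore [LinearOrder α] (m : ℕ) (X : Finset α) : Set (α × α) :=
  if h : #X = m * m + m * m then
    Set.range (gridMap (fun i => X.orderEmbOfFin h (Fin.castAdd _ i))
      (fun i => X.orderEmbOfFin h (Fin.natAdd _ i)))
  else ∅

theorem gridCore_union [LinearOrder α] {m : ℕ} {A B : Finset α} (hA : #A = m * m)
    (hB : #B = m * m) (hAB : ∀ a ∈ A, ∀ b ∈ B, a < b) :
    gridCore m (A ∪ B) = Set.range (gridMap (A.orderEmbOfFin hA) (B.orderEmbOfFin hB)) := by
  have h : #(A ∪ B) = m * m + m * m := by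
    rw [card_union_of_disjoint (disjoint_left.2 fun a ha hb => (hAB a ha a hb).false), hA, hB]
  simp only [gridCore, dif_pos h, orderEmbOfFin_union hA hB hAB h, Fin.append_left,
    Fin.append_right]

theorem IsRealizer.gridCore_image_union [LinearOrder α] {m : ℕ} {p q : Fin m × Fin m → α}
    (h : IsRealizer p q) (hp : Injective p) (hq : Injective q) (hpq : ∀ x y, p x < q y) :
    gridCore m (univ.image p ∪ univ.image q) = Set.range fun x => (p x, q x) := by
  have hA : #(univ.image p) = m * m := by simp [card_image_of_injective _ hp]
  have hB : #(univ.image q) = m * m := by simp [card_image_of_injective _ hq]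
  have hAB : ∀ a ∈ univ.image p, ∀ b ∈ univ.image q, a < b := by
    simp only [mem_image, mem_univ, true_and, forall_exists_index, forall_apply_eq_imp_iff]
    exact hpq
  rw [gridCore_union hA hB hAB, h.range_eq_range_gridMap hp hq hA
    (fun x => mem_image_of_mem _ (mem_univ x)) hB (fun x => mem_image_of_mem _ (mem_univ x))]

theorem exists_gridCore_eq_range [LinearOrder α] {l m : ℕ} {a b : Fin (l * l) → α}
    (ha : Injective a) (hb : Injective b) (hab : ∀ i j, a i < b j) {S : Finset α}
    (haS : ∀ i, a i ∈ S) (hbS : ∀ i, b i ∈ S) {D : Fin m × Fin m → α × α}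
    (hD : ∀ x y, x ≤ y ↔ D x ≤ D y) (hDF : Set.range D ⊆ Set.range (gridMap a b)) :
    ∃ X ⊆ S, #X = m * m + m * m ∧ gridCore m X = Set.range D := by
  choose E hE using fun x => hDF (Set.mem_range_self x)
  have hEinj : Injective E := fun x y hxy => by
    refine le_antisymm ((hD x y).2 ?_) ((hD y x).2 ?_) <;> rw [← hE, ← hE, hxy]
  set p := fun x => (D x).1
  set q := fun x => (D x).2
  have hp : ∀ x, p x = a (finProdFinEquiv (E x)) := fun x => by simp [p, ← hE x, gridMap]
  have hq : ∀ x, q x = b (finProdFinEquiv (E x).swap) := fun x => by simp [q, ← hE x, gridMap]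
  have hpinj : Injective p := fun x y hxy =>
    hEinj (finProdFinEquiv.injective (ha (by rwa [hp, hp] at hxy)))
  have hqinj : Injective q := fun x y hxy =>
    hEinj (Prod.swap_injective (finProdFinEquiv.injective (hb (by rwa [hq, hq] at hxy))))
  have hpq : ∀ x y, p x < q y := fun x y => by rw [hp, hq]; exact hab _ _
  refine ⟨univ.image p ∪ univ.image q, union_subset ?_ ?_, ?_,
    (IsRealizer.gridCore_image_union (fun x y => hD x y) hpinj hqinj hpq)⟩
  · simp only [subset_iff, mem_image, mem_univ, true_and, forall_exists_index,
      forall_apply_eq_imp_iff, hp, haS, implies_true]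
  · simp only [subset_iff, mem_image, mem_univ, true_and, forall_exists_index,
      forall_apply_eq_imp_iff, hq, hbS, implies_true]
  · rw [card_union_of_disjoint (disjoint_left.2 fun x hx hx' => ?_),
      card_image_of_injective _ hpinj, card_image_of_injective _ hqinj]
    · simp
    · obtain ⟨y, -, rfl⟩ := mem_image.1 hx
      obtain ⟨z, -, hz⟩ := mem_image.1 hx'
      exact (hpq y z).ne hz.symm

end GridCore

theorem stmt_13_general (r m l : ℕ) :
    ∃ n : ℕ, ∀ c : Set (Fin n × Fin n) → Fin r,
      ∃ F : Fin l × Fin l → Fin n × Fin n,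
        (∀ x y : Fin l × Fin l, x ≤ y ↔ F x ≤ F y) ∧
        ∃ k : Fin r,
          ∀ D : Fin m × Fin m → Fin n × Fin n,
            (∀ x y : Fin m × Fin m, x ≤ y ↔ D x ≤ D y) →
            Set.range D ⊆ Set.range F →
            c (Set.range D) = k := by
  obtain ⟨n, hn⟩ := exists_homogeneous_subset (κ := Fin r) (m * m + m * m) (l * l + l * l)
  refine ⟨n, fun c => ?_⟩
  obtain ⟨S, -, hS, k, hk⟩ := hn (univ : Finset (Fin n)) (by simp) fun X => c (gridCore m X)
  set s := S.orderEmbOfFin hS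
  have ha : StrictMono fun i => s (Fin.castAdd _ i) := s.strictMono.comp (Fin.strictMono_castAdd _)
  have hb : StrictMono fun i => s (Fin.natAdd _ i) := s.strictMono.comp (Fin.strictMono_natAdd _)
  refine ⟨gridMap _ _, fun x y => (gridMap_le_gridMap_iff ha hb).symm, k, fun D hD hDF => ?_⟩
  obtain ⟨X, hXS, hX, hXD⟩ := exists_gridCore_eq_range ha.injective hb.injective
    (fun i j => s.strictMono (Fin.castAdd_lt_natAdd i j)) (fun _ => orderEmbOfFin_mem _ _ _)
    (fun _ => orderEmbOfFin_mem _ _ _) hD hDF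
  rw [← hXD]
  exact hk X hXS hX

/-- (the `t = 2` case of the subposet Ramsey conjecture)
For all `r, m, l > 0` there is `n` such that for every `r`-coloring of the subsets of
the grid `Fin n × Fin n` (in particular of those subposets isomorphic to the grid
`m×m`, i.e. images of order embeddings of `Fin m × Fin m`), there is a subposet
isomorphic to `l×l` all of whose `m×m` subposets get the same color. -/
theorem stmt_13 (r m l : ℕ) (hr : 0 < r) (hm : 0 < m) (hl : 0 < l) :
    ∃ n : ℕ, ∀ c : Set (Fin n × Fin n) → Fin r,
      ∃ F : Fin l × Fin l → Fin n × Fin n,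
        (∀ x y : Fin l × Fin l, x ≤ y ↔ F x ≤ F y) ∧
        ∃ k : Fin r,
          ∀ D : Fin m × Fin m → Fin n × Fin n,
            (∀ x y : Fin m × Fin m, x ≤ y ↔ D x ≤ D y) →
            Set.range D ⊆ Set.range F →
            c (Set.range D) = k :=
  stmt_13_general r m l
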